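/- arXiv:2112.14638 — 2 statements merged into one kernel-verified Lean document; each statement's English description precedes it below -/
import Mathlib

section
/- For any separable near-metric value space (𝒴,ℓ) with 0 < ℓ̄ < ∞, every process admitting strong universal online learning for countable classification also admits strong universal online learning for (𝒴,ℓ): SUOL_{(𝒳,ρ,ℕ,ℓ01)} ⊆ SUOL_{(𝒳,ρ,𝒴,ℓ)}. -/
open MeasureTheory Filter Topology

/-- A near-metric loss structure on `Y`: symmetric, point-discerning, with a
relaxed triangle inequality with constant `c`. -/
structure NearMetric (Y : Type) where
  loss : Y → Y → ℝ
  nonneg : ∀ y₁ y₂, 0 ≤ loss y₁ y₂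
  symm : ∀ y₁ y₂, loss y₁ y₂ = loss y₂ y₁
  eq_zero_iff : ∀ y₁ y₂, loss y₁ y₂ = 0 ↔ y₁ = y₂
  c : ℝ
  c_nonneg : 0 ≤ c
  triangle : ∀ y₁ y₂ y₃, loss y₁ y₃ ≤ c * (loss y₂ y₁ + loss y₂ y₃)

namespace NearMetric

/-- `(Y, ℓ)` is separable: there is a countable `ℓ`-dense sequence. -/
def Separable {Y : Type} (L : NearMetric Y) : Prop :=
  ∃ s : ℕ → Y, ∀ y : Y, ∀ ε : ℝ, 0 < ε → ∃ i : ℕ, L.loss (s i) y < ε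

/-- `0 < ℓ̄ < ∞`: the supremum of the loss is positive and finite. -/
def BoundedPos {Y : Type} (L : NearMetric Y) : Prop :=
  (∃ y₁ y₂, 0 < L.loss y₁ y₂) ∧ (∃ M : ℝ, ∀ y₁ y₂, L.loss y₁ y₂ ≤ M)

/-- The σ-algebra on `Y` generated by `ℓ`-balls. -/
def mSpace {Y : Type} (L : NearMetric Y) : MeasurableSpace Y :=
  MeasurableSpace.generateFrom {B | ∃ (y : Y) (ε : ℝ), B = {y' | L.loss y y' < ε}}

/-- Measurability of a map into `Y` with respect to the ball σ-algebra of `L`. -/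
def MeasurableFun {X Y : Type} [MeasurableSpace X] (L : NearMetric Y) (f : X → Y) : Prop :=
  @Measurable X Y _ L.mSpace f

end NearMetric

/-- The 0–1 loss on any type with decidable equality. -/
def l01 (Y : Type) [DecidableEq Y] : NearMetric Y where
  loss y₁ y₂ := if y₁ = y₂ then 0 else 1
  nonneg := by intro a b; split <;> norm_num
  symm := by intro a b; simp [eq_comm]
  eq_zero_iff := by intro a b; split <;> simp_all
  c := 1
  c_nonneg := by norm_num
  triangle := by
    intro a b c
    by_cases h1 : a = c <;> by_cases h2 : b = a <;> by_cases h3 : b = c <;>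
      simp_all

/-- An online learning rule: a sequence of measurable maps
`f t : 𝒳^t × 𝒴^t × 𝒳 → 𝒴` (the history at time `t+1` has length `t`). -/
def IsLearningRule {X Y : Type} [MeasurableSpace X] (L : NearMetric Y)
    (f : (t : ℕ) → (Fin t → X) → (Fin t → Y) → X → Y) : Prop :=
  letI : MeasurableSpace Y := L.mSpace
  ∀ t : ℕ, Measurable fun p : (Fin t → X) × (Fin t → Y) × X => f t p.1 p.2.1 p.2.2

/-- The average loss of learning rule `f` on target `fstar` under process `Xp`
up to horizon `T`, at sample `ω`. -/
noncomputable def avgLoss {X Y Ω : Type} (L : NearMetric Y) (Xp : ℕ → Ω → X)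
    (f : (t : ℕ) → (Fin t → X) → (Fin t → Y) → X → Y) (fstar : X → Y)
    (T : ℕ) (ω : Ω) : ℝ :=
  (T : ℝ)⁻¹ * ∑ t ∈ Finset.range T,
    L.loss (f t (fun i => Xp i.1 ω) (fun i => fstar (Xp i.1 ω)) (Xp t ω)) (fstar (Xp t ω))

/-- The rule `f` is (strongly) consistent for target `fstar` under the process `Xp`. -/
def Consistent {X Y Ω : Type} [MeasurableSpace Ω] (μ : Measure Ω) (L : NearMetric Y)
    (Xp : ℕ → Ω → X) (f : (t : ℕ) → (Fin t → X) → (Fin t → Y) → X → Y)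
    (fstar : X → Y) : Prop :=
  ∀ᵐ ω ∂μ, Tendsto (fun T => avgLoss L Xp f fstar T ω) atTop (𝓝 0)

/-- `Xp ∈ SUOL`: the process admits strong universal online learning for
the value space `(Y, L)`. -/
def SUOL {X Y Ω : Type} [MeasurableSpace X] [MeasurableSpace Ω] (μ : Measure Ω)
    (L : NearMetric Y) (Xp : ℕ → Ω → X) : Prop :=
  ∃ f : (t : ℕ) → (Fin t → X) → (Fin t → Y) → X → Y,
    IsLearningRule L f ∧
    ∀ fstar : X → Y, L.MeasurableFun fstar → Consistent μ L Xp f fstar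

/-!
Quantize the labels: for an `ℓ`-dense sequence `s` and scales `εₖ = 2⁻ᵏ`, let `qₖ y` be the first
index `i` with `ℓ(sᵢ, y) < εₖ`. Running the countable-classification learner on the labels
`qₖ ∘ f*` and predicting `s` of its output gives an expert whose loss exceeds `εₖ` only when the
classifier errs, and then by at most `ℓ̄`; so almost surely, for every `k` at once, its cumulative
loss is eventually below `2εₖ t`. The final rule follows at time `t` the largest `k ≤ √t` whose
expert has met this bound on the history. From some time on that index is at least any given `j`,
each followed expert contributes at most its bound plus one loss, and at most `√T + 1` experts are
followed before time `T`; since `∑ₖ εₖ < ∞`, the average loss tends to zero.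
-/

open Finset

lemma measurable_apply_index {α β : Type*} [MeasurableSpace α] [MeasurableSpace β]
    {N : α → ℕ} {F : ℕ → α → β} (hN : Measurable N) (hF : ∀ n, Measurable (F n)) :
    Measurable fun a => F (N a) a :=
  (measurable_from_prod_countable_left (f := fun p : α × ℕ => F p.2 p.1) hF).comp
    (measurable_id.prodMk hN)

namespace NearMetric

variable {Y : Type} (L : NearMetric Y)

lemma measurableSet_ball (y : Y) (r : ℝ) : MeasurableSet[L.mSpace] {y' | L.loss y y' < r} :=
  MeasurableSpace.measurableSet_generateFrom ⟨y, r, rfl⟩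

lemma measurable_loss_comp {α : Type} [MeasurableSpace α] (s : ℕ → Y) {n : α → ℕ} {y : α → Y}
    (hn : Measurable n) (hy : @Measurable α Y _ L.mSpace y) :
    Measurable fun a => L.loss (s (n a)) (y a) :=
  letI := L.mSpace
  measurable_apply_index (F := fun k a => L.loss (s k) (y a)) hn fun k =>
    (measurable_of_Iio fun r => L.measurableSet_ball (s k) r).comp hy

variable {L} {s : ℕ → Y} {ε : ℝ}

noncomputable def quantize (hs : ∀ y, ∃ i, L.loss (s i) y < ε) (y : Y) : ℕ :=
  Nat.find (hs y)

lemma loss_quantize_lt (hs : ∀ y, ∃ i, L.loss (s i) y < ε) (y : Y) :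
    L.loss (s (quantize hs y)) y < ε :=
  Nat.find_spec (hs y)

lemma measurable_quantize (hs : ∀ y, ∃ i, L.loss (s i) y < ε) :
    @Measurable Y ℕ L.mSpace _ (quantize hs) :=
  @measurable_find Y L.mSpace _ _ hs fun k => L.measurableSet_ball (s k) ε

end NearMetric

lemma l01_mSpace {α : Type} [DecidableEq α] [Countable α] : (l01 α).mSpace = ⊤ := by
  refine le_antisymm le_top fun S _ => ?_
  have hball : ∀ a : α, {a' | (l01 α).loss a a' < 1} = {a} := fun a => by
    ext a'
    by_cases h : a = a' <;> simp [l01, h, eq_comm]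
  rw [← S.biUnion_of_singleton]
  exact .biUnion S.to_countable fun a _ => hball a ▸ (l01 α).measurableSet_ball a 1

section Aggregation

/-- This is `0` when no `k ≤ √t` qualifies. The cap `√t` keeps the number of distinct indices
selected before time `T` at `o(T)`. -/
noncomputable def selectIndex (cum : ℕ → ℝ) (δ : ℕ → ℝ) (t : ℕ) : ℕ :=
  Nat.findGreatest (fun k => cum k ≤ δ k * t) (Nat.sqrt t)

lemma selectIndex_le_sqrt (cum δ : ℕ → ℝ) (t : ℕ) : selectIndex cum δ t ≤ Nat.sqrt t :=
  Nat.findGreatest_le _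

lemma le_selectIndex {cum δ : ℕ → ℝ} {t j : ℕ} (hj : j ≤ Nat.sqrt t) (hcum : cum j ≤ δ j * t) :
    j ≤ selectIndex cum δ t :=
  Nat.le_findGreatest hj hcum

lemma cum_selectIndex_le {cum δ : ℕ → ℝ} {t j : ℕ} (hj : j ≤ Nat.sqrt t)
    (hcum : cum j ≤ δ j * t) : cum (selectIndex cum δ t) ≤ δ (selectIndex cum δ t) * t :=
  Nat.findGreatest_spec (P := fun k => cum k ≤ δ k * t) hj hcum

lemma sum_le_of_forall_sum_range_le {a : ℕ → ℝ} {M c : ℝ} (ha0 : ∀ t, 0 ≤ a t)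
    (haM : ∀ t, a t ≤ M) (hc : 0 ≤ c) {S : Finset ℕ} {T : ℕ} (hST : ∀ t ∈ S, t < T)
    (hS : ∀ t ∈ S, ∑ i ∈ range t, a i ≤ c * t) :
    ∑ t ∈ S, a t ≤ c * T + M := by
  rcases S.eq_empty_or_nonempty with rfl | hne
  · simp only [sum_empty]
    exact add_nonneg (by positivity) ((ha0 0).trans (haM 0))
  -- only the last time `t'` of `S` matters: `S ⊆ range (t' + 1)`
  set t' := S.max' hne
  have ht' : t' ∈ S := S.max'_mem hne
  have hT : (t' : ℝ) ≤ T := by exact_mod_cast (hST t' ht').le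
  calc ∑ t ∈ S, a t ≤ ∑ t ∈ range (t' + 1), a t :=
        sum_le_sum_of_subset_of_nonneg (fun t ht => mem_range_succ_iff.2 (S.le_max' t ht))
          fun t _ _ => ha0 t
    _ = ∑ t ∈ range t', a t + a t' := sum_range_succ a t'
    _ ≤ c * t' + M := add_le_add (hS t' ht') (haM t')
    _ ≤ c * T + M := by gcongr

lemma sum_le_tsum_nat_add_of_le {δ : ℕ → ℝ} (hδ0 : ∀ k, 0 ≤ δ k) (hδ : Summable δ)
    {F : Finset ℕ} {j : ℕ} (hF : ∀ k ∈ F, j ≤ k) :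
    ∑ k ∈ F, δ k ≤ ∑' k, δ (k + j) := by
  have hdisj : Disjoint (range j) F :=
    disjoint_left.2 fun k hk hkF => (mem_range.1 hk).not_ge (hF k hkF)
  have := hδ.sum_le_tsum (range j ∪ F) fun k _ => hδ0 k
  rw [sum_union hdisj, ← hδ.sum_add_tsum_nat_add j] at this
  linarith

lemma tendsto_nat_sqrt_div_atTop_nhds_zero :
    Tendsto (fun T : ℕ => (Nat.sqrt T : ℝ) / T) atTop (𝓝 0) := by
  have hsqrt : Tendsto Nat.sqrt atTop atTop :=
    tendsto_atTop_atTop.2 fun b => ⟨b * b, fun T hT => Nat.le_sqrt.2 hT⟩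
  refine squeeze_zero' (Eventually.of_forall fun T => by positivity) ?_
    (tendsto_inv_atTop_zero.comp (tendsto_natCast_atTop_atTop.comp hsqrt))
  filter_upwards [hsqrt.eventually_ge_atTop 1] with T hT
  have h1 : (1 : ℝ) ≤ Nat.sqrt T := by exact_mod_cast hT
  have hpos : (0 : ℝ) < Nat.sqrt T := by linarith
  have hsq : (Nat.sqrt T : ℝ) * Nat.sqrt T ≤ T := by exact_mod_cast Nat.sqrt_le T
  rw [Function.comp_apply, Function.comp_apply, div_le_iff₀ (hpos.trans_le (by nlinarith)),
    inv_mul_eq_div, le_div_iff₀ hpos]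
  nlinarith

variable {M : ℝ} {lam : ℕ → ℕ → ℝ} {δ : ℕ → ℝ}

/-- Once expert `j` is admissible from time `τ` on, every later selected expert has index at
least `j`; grouping times by selected expert, each group costs its threshold plus one loss. -/
lemma sum_selected_le (hlam0 : ∀ k t, 0 ≤ lam k t) (hlamM : ∀ k t, lam k t ≤ M)
    (hδ0 : ∀ k, 0 ≤ δ k) (hδ : Summable δ) {j τ : ℕ}
    (hτ : ∀ t, τ ≤ t → j ≤ Nat.sqrt t ∧ ∑ i ∈ range t, lam j i ≤ δ j * t)
    {T : ℕ} (hT : τ ≤ T) :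
    ∑ t ∈ range T, lam (selectIndex (fun k => ∑ i ∈ range t, lam k i) δ t) t
      ≤ M * τ + (∑' k, δ (k + j)) * T + (Nat.sqrt T + 1) * M := by
  set sel := fun t => selectIndex (fun k => ∑ i ∈ range t, lam k i) δ t
  have hsel : ∀ t, τ ≤ t → j ≤ sel t ∧ ∑ i ∈ range t, lam (sel t) i ≤ δ (sel t) * t :=
    fun t ht => ⟨le_selectIndex (hτ t ht).1 (hτ t ht).2,
      cum_selectIndex_le (cum := fun k => ∑ i ∈ range t, lam k i) (hτ t ht).1 (hτ t ht).2⟩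
  have hmaps : ∀ t ∈ Ico τ T, sel t ∈ Icc j (Nat.sqrt T) := fun t ht =>
    mem_Icc.2 ⟨(hsel t (mem_Ico.1 ht).1).1,
      (selectIndex_le_sqrt _ _ t).trans (Nat.sqrt_le_sqrt (mem_Ico.1 ht).2.le)⟩
  have hhead : ∑ t ∈ range τ, lam (sel t) t ≤ M * τ := by
    simpa [mul_comm] using sum_le_card_nsmul (range τ) _ M fun t _ => hlamM _ t
  have hfiber : ∀ k ∈ Icc j (Nat.sqrt T),
      ∑ t ∈ Ico τ T with sel t = k, lam (sel t) t ≤ δ k * T + M := by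
    intro k _
    rw [sum_congr rfl fun t ht => by rw [(mem_filter.1 ht).2]]
    refine sum_le_of_forall_sum_range_le (hlam0 k) (hlamM k) (hδ0 k)
      (fun t ht => (mem_Ico.1 (mem_filter.1 ht).1).2) fun t ht => ?_
    obtain ⟨htI, rfl⟩ := mem_filter.1 ht
    exact (hsel t (mem_Ico.1 htI).1).2
  have hcard : ((Icc j (Nat.sqrt T)).card : ℝ) ≤ Nat.sqrt T + 1 := by
    rw [Nat.card_Icc]; exact_mod_cast (by omega : Nat.sqrt T + 1 - j ≤ Nat.sqrt T + 1)
  have hM0 : 0 ≤ M := (hlam0 0 0).trans (hlamM 0 0)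
  have htail := sum_le_tsum_nat_add_of_le hδ0 hδ (F := Icc j (Nat.sqrt T))
    fun k hk => (mem_Icc.1 hk).1
  calc ∑ t ∈ range T, lam (sel t) t
      = ∑ t ∈ range τ, lam (sel t) t + ∑ t ∈ Ico τ T, lam (sel t) t :=
        (sum_range_add_sum_Ico _ hT).symm
    _ ≤ M * τ + ∑ k ∈ Icc j (Nat.sqrt T), (δ k * T + M) := by
        rw [← sum_fiberwise_of_maps_to hmaps]
        exact add_le_add hhead (sum_le_sum hfiber)
    _ = M * τ + (∑ k ∈ Icc j (Nat.sqrt T), δ k) * T + (Icc j (Nat.sqrt T)).card * M := by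
        rw [sum_add_distrib, sum_mul, sum_const, nsmul_eq_mul]; ring
    _ ≤ M * τ + (∑' k, δ (k + j)) * T + (Nat.sqrt T + 1) * M := by gcongr

theorem tendsto_avg_selected (hlam0 : ∀ k t, 0 ≤ lam k t) (hlamM : ∀ k t, lam k t ≤ M)
    (hδ0 : ∀ k, 0 ≤ δ k) (hδ : Summable δ)
    (hev : ∀ k, ∀ᶠ t in atTop, ∑ i ∈ range t, lam k i ≤ δ k * t) :
    Tendsto (fun T : ℕ => (T : ℝ)⁻¹ *
      ∑ t ∈ range T, lam (selectIndex (fun k => ∑ i ∈ range t, lam k i) δ t) t)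
      atTop (𝓝 0) := by
  set avg := fun T : ℕ => (T : ℝ)⁻¹ *
      ∑ t ∈ range T, lam (selectIndex (fun k => ∑ i ∈ range t, lam k i) δ t) t
  have havg0 : ∀ T, 0 ≤ avg T := fun T =>
    mul_nonneg (by positivity) (sum_nonneg fun t _ => hlam0 _ t)
  suffices h : ∀ θ > 0, ∀ᶠ T in atTop, avg T ≤ 2 * θ by
    refine tendsto_order.2 ⟨fun a ha => Eventually.of_forall fun T => ha.trans_le (havg0 T),
      fun a ha => ?_⟩
    filter_upwards [h (a / 3) (by positivity)] with T hT
    linarith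
  intro θ hθ
  obtain ⟨j, hj⟩ := ((tendsto_sum_nat_add δ).eventually (eventually_le_nhds hθ)).exists
  obtain ⟨τ, hτ⟩ := eventually_atTop.1 <|
    ((eventually_ge_atTop (j * j)).mono fun t ht => Nat.le_sqrt.2 ht).and (hev j)
  have hrest : Tendsto (fun T : ℕ => (M * τ + M) / T + M * ((Nat.sqrt T : ℝ) / T))
      atTop (𝓝 0) := by
    simpa using (tendsto_const_div_atTop_nhds_zero_nat (M * τ + M)).add
      (tendsto_nat_sqrt_div_atTop_nhds_zero.const_mul M)
  filter_upwards [eventually_ge_atTop τ, eventually_gt_atTop 0,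
    hrest.eventually (eventually_le_nhds hθ)] with T hτT hTpos hTrest
  have hT0 : (T : ℝ) ≠ 0 := by positivity
  have hsum := sum_selected_le hlam0 hlamM hδ0 hδ hτ hτT
  calc avg T ≤ (T : ℝ)⁻¹ * (M * τ + (∑' k, δ (k + j)) * T + (Nat.sqrt T + 1) * M) :=
        mul_le_mul_of_nonneg_left hsum (by positivity)
    _ = ∑' k, δ (k + j) + ((M * τ + M) / T + M * ((Nat.sqrt T : ℝ) / T)) := by
        field_simp; ring
    _ ≤ 2 * θ := by linarith

end Aggregation

abbrev OnlineRule (X Y : Type) := (t : ℕ) → (Fin t → X) → (Fin t → Y) → X → Y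

section OnlineRule

variable {X Y Ω : Type}

def quantizedRule (s : ℕ → Y) (q : Y → ℕ) (f : OnlineRule X ℕ) : OnlineRule X Y :=
  fun t xs ys x => s (f t xs (q ∘ ys) x)

def historyLoss (L : NearMetric Y) (g : OnlineRule X Y) (t : ℕ) (xs : Fin t → X)
    (ys : Fin t → Y) : ℝ :=
  ∑ i : Fin t, L.loss (g i (Fin.take i i.isLt.le xs) (Fin.take i i.isLt.le ys) (xs i)) (ys i)

noncomputable def aggregate (L : NearMetric Y) (g : ℕ → OnlineRule X Y) (δ : ℕ → ℝ) :
    OnlineRule X Y :=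
  fun t xs ys x => g (selectIndex (fun k => historyLoss L (g k) t xs ys) δ t) t xs ys x

def lossAt (L : NearMetric Y) (Xp : ℕ → Ω → X) (g : OnlineRule X Y) (fstar : X → Y) (ω : Ω)
    (t : ℕ) : ℝ :=
  L.loss (g t (fun i => Xp i.1 ω) (fun i => fstar (Xp i.1 ω)) (Xp t ω)) (fstar (Xp t ω))

lemma historyLoss_eq_sum_lossAt (L : NearMetric Y) (Xp : ℕ → Ω → X) (g : OnlineRule X Y)
    (fstar : X → Y) (ω : Ω) (T : ℕ) :
    historyLoss L g T (fun i => Xp i.1 ω) (fun i => fstar (Xp i.1 ω))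
      = ∑ t ∈ range T, lossAt L Xp g fstar ω t :=
  Fin.sum_univ_eq_sum_range (lossAt L Xp g fstar ω) T

lemma avgLoss_aggregate (L : NearMetric Y) (Xp : ℕ → Ω → X) (g : ℕ → OnlineRule X Y)
    (δ : ℕ → ℝ) (fstar : X → Y) (T : ℕ) (ω : Ω) :
    avgLoss L Xp (aggregate L g δ) fstar T ω = (T : ℝ)⁻¹ * ∑ t ∈ range T,
      lossAt L Xp (g (selectIndex (fun k => ∑ i ∈ range t, lossAt L Xp (g k) fstar ω i) δ t))
        fstar ω t := by
  refine congrArg _ (sum_congr rfl fun t _ => ?_)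
  rw [lossAt]
  dsimp only [aggregate]
  simp_rw [historyLoss_eq_sum_lossAt]

lemma consistent_aggregate [MeasurableSpace Ω] {μ : Measure Ω} {L : NearMetric Y} {M : ℝ}
    (hM : ∀ y₁ y₂, L.loss y₁ y₂ ≤ M) {Xp : ℕ → Ω → X} {g : ℕ → OnlineRule X Y} {δ : ℕ → ℝ}
    (hδ0 : ∀ k, 0 ≤ δ k) (hδ : Summable δ) {fstar : X → Y}
    (hg : ∀ k, ∀ᵐ ω ∂μ, ∀ᶠ T in atTop, ∑ t ∈ range T, lossAt L Xp (g k) fstar ω t ≤ δ k * T) :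
    Consistent μ L Xp (aggregate L g δ) fstar := by
  refine (ae_all_iff.2 hg).mono fun ω hω => ?_
  simp only [avgLoss_aggregate]
  exact tendsto_avg_selected (lam := fun k t => lossAt L Xp (g k) fstar ω t)
    (fun k t => L.nonneg _ _) (fun k t => hM _ _) hδ0 hδ hω

lemma loss_le_add_mul_l01 {L : NearMetric Y} {M ε : ℝ} (hM : ∀ y₁ y₂, L.loss y₁ y₂ ≤ M)
    {s : ℕ → Y} {q : Y → ℕ} (hq : ∀ y, L.loss (s (q y)) y < ε) (n : ℕ) (y : Y) :
    L.loss (s n) y ≤ ε + M * (l01 ℕ).loss n (q y) := by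
  by_cases h : n = q y
  · simpa [l01, h] using (hq y).le
  · have hε := (L.nonneg _ _).trans_lt (hq y)
    simp only [l01, h, if_false, mul_one]
    linarith [hM (s n) y]

lemma eventually_sum_lossAt_quantizedRule_le {L : NearMetric Y} {M ε : ℝ}
    (hM : ∀ y₁ y₂, L.loss y₁ y₂ ≤ M) (hε : 0 < ε) {s : ℕ → Y} {q : Y → ℕ}
    (hq : ∀ y, L.loss (s (q y)) y < ε) {Xp : ℕ → Ω → X} {f : OnlineRule X ℕ} {fstar : X → Y}
    {ω : Ω} (hf : Tendsto (fun T => avgLoss (l01 ℕ) Xp f (q ∘ fstar) T ω) atTop (𝓝 0)) :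
    ∀ᶠ T in atTop, ∑ t ∈ range T, lossAt L Xp (quantizedRule s q f) fstar ω t ≤ 2 * ε * T := by
  have hMf := (hf.const_mul M).eventually (eventually_le_nhds (by simpa using hε))
  filter_upwards [hMf, eventually_ge_atTop 1] with T hT hT1
  have hTpos : (0 : ℝ) < T := by exact_mod_cast hT1
  have hsum : M * ∑ t ∈ range T, lossAt (l01 ℕ) Xp f (q ∘ fstar) ω t ≤ ε * T := by
    rw [avgLoss, ← mul_assoc, mul_comm M, mul_assoc, inv_mul_le_iff₀ hTpos] at hT
    simpa [lossAt, mul_comm] using hT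
  calc ∑ t ∈ range T, lossAt L Xp (quantizedRule s q f) fstar ω t
      ≤ ∑ t ∈ range T, (ε + M * lossAt (l01 ℕ) Xp f (q ∘ fstar) ω t) :=
        sum_le_sum fun t _ => loss_le_add_mul_l01 hM hq _ _
    _ = ε * T + M * ∑ t ∈ range T, lossAt (l01 ℕ) Xp f (q ∘ fstar) ω t := by
        rw [sum_add_distrib, sum_const, card_range, nsmul_eq_mul, mul_sum, mul_comm]
    _ ≤ 2 * ε * T := by linarith

end OnlineRule

lemma isLearningRule_aggregate_quantizedRule {X Y : Type} [MeasurableSpace X] {L : NearMetric Y}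
    {s : ℕ → Y} {q : ℕ → Y → ℕ} {f : OnlineRule X ℕ} (hq : ∀ k, @Measurable Y ℕ L.mSpace _ (q k))
    (hf : IsLearningRule (l01 ℕ) f) (δ : ℕ → ℝ) :
    IsLearningRule L (aggregate L (fun k => quantizedRule s (q k) f) δ) := by
  let : MeasurableSpace Y := L.mSpace
  have hf' : ∀ u, Measurable fun p : (Fin u → X) × (Fin u → ℕ) × X => f u p.1 p.2.1 p.2.2 := by
    intro u
    have h := hf u
    rwa [l01_mSpace] at h
  intro t
  have hcode : ∀ k u {a : (Fin t → X) × (Fin t → Y) × X → Fin u → X}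
      {b : (Fin t → X) × (Fin t → Y) × X → Fin u → Y} {c : (Fin t → X) × (Fin t → Y) × X → X},
      Measurable a → Measurable b → Measurable c →
      Measurable fun p => f u (a p) (q k ∘ b p) (c p) := fun k u a b c ha hb hc =>
    (hf' u).comp (ha.prodMk ((measurable_pi_lambda _ fun i =>
      (hq k).comp ((measurable_pi_apply i).comp hb)).prodMk hc))
  have htake : ∀ {β : Type} [MeasurableSpace β] (i : Fin t),
      Measurable fun v : Fin t → β => Fin.take i i.isLt.le v := fun _ =>
    measurable_pi_lambda _ fun _ => measurable_pi_apply _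
  have hhist : ∀ k, Measurable fun p : (Fin t → X) × (Fin t → Y) × X =>
      historyLoss L (quantizedRule s (q k) f) t p.1 p.2.1 := fun k =>
    Finset.measurable_sum _ fun i _ => L.measurable_loss_comp s
      (hcode k i ((htake i).comp measurable_fst) ((htake i).comp measurable_snd.fst)
        ((measurable_pi_apply i).comp measurable_fst))
      ((measurable_pi_apply i).comp measurable_snd.fst)
  have hsel := measurable_findGreatest (N := Nat.sqrt t)
    (p := fun (p : (Fin t → X) × (Fin t → Y) × X) k =>
      historyLoss L (quantizedRule s (q k) f) t p.1 p.2.1 ≤ δ k * t)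
    fun k _ => measurableSet_le (hhist k) measurable_const
  exact measurable_apply_index hsel fun k => measurable_from_nat.comp
    (hcode k t measurable_fst measurable_snd.fst measurable_snd.snd)

theorem suol_countable_subset_suol_general
    {𝒳 : Type} [MeasurableSpace 𝒳]
    {Y : Type} (L : NearMetric Y) (hsep : L.Separable) (hbd : L.BoundedPos)
    {Ω : Type} [MeasurableSpace Ω] (μ : Measure Ω)
    (Xp : ℕ → Ω → 𝒳) :
    SUOL μ (l01 ℕ) Xp → SUOL μ L Xp := by
  rintro ⟨f, hf, hcons⟩
  obtain ⟨s, hs⟩ := hsep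
  obtain ⟨-, M, hM⟩ := hbd
  have hε : ∀ k : ℕ, (0 : ℝ) < (1 / 2) ^ k := fun k => by positivity
  let q k := NearMetric.quantize fun y => hs y _ (hε k)
  refine ⟨aggregate L (fun k => quantizedRule s (q k) f) fun k => 2 * (1 / 2) ^ k,
    isLearningRule_aggregate_quantizedRule (fun k => NearMetric.measurable_quantize _) hf _,
    fun fstar hfstar => consistent_aggregate hM (fun k => by positivity)
      (summable_geometric_two.mul_left 2) fun k => ?_⟩
  have hqf : (l01 ℕ).MeasurableFun (q k ∘ fstar) := by
    rw [NearMetric.MeasurableFun, l01_mSpace]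
    exact (NearMetric.measurable_quantize _).comp hfstar
  filter_upwards [hcons _ hqf] with ω hω
  simpa only [mul_assoc] using
    eventually_sum_lossAt_quantizedRule_le hM (hε k) (NearMetric.loss_quantize_lt _) hω

/-- For any separable near-metric value space `(Y, L)` with
`0 < ℓ̄ < ∞`, every process admitting strong universal online learning for countable
classification `(ℕ, ℓ01)` also admits it for `(Y, L)`. -/
theorem suol_countable_subset_suol
    {𝒳 : Type} [MetricSpace 𝒳] [TopologicalSpace.SeparableSpace 𝒳]
    [MeasurableSpace 𝒳] [BorelSpace 𝒳]
    {Y : Type} (L : NearMetric Y) (hsep : L.Separable) (hbd : L.BoundedPos)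
    {Ω : Type} [MeasurableSpace Ω] (μ : Measure Ω) [IsProbabilityMeasure μ]
    (Xp : ℕ → Ω → 𝒳) (hX : ∀ t, Measurable (Xp t)) :
    SUOL μ (l01 ℕ) Xp → SUOL μ L Xp :=
  suol_countable_subset_suol_general L hsep hbd μ Xp
end

section
/- Let a ∈ ℝ and let 𝒫_a be the dyadic partition around a. For every sequence (x_t)_{t≥1} in ℝ, every horizon T ≥ 1, and f* = 𝟙_{(−∞,a)} or f* = 𝟙_{(−∞,a]}, the number of times t ∈ {1,...,T} at which the nearest neighbor prediction errs (i.e., f*(x_{φ(t)}) ≠ f*(x_t), with t = 1 always counted as an error) is at most the number of cells of 𝒫_a that intersect {x_1,...,x_T}. -/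
open MeasureTheory Filter Topology

/-- The nearest neighbor representant index: for `t ≥ 1`, `nnIdx x t` is the smallest
`s < t` minimizing `dist (x t) (x s)` (ties broken in favor of the smallest index);
for `t = 0` it is `0` by convention. -/
noncomputable def nnIdx {X : Type} [MetricSpace X] (x : ℕ → X) (t : ℕ) : ℕ :=
  letI := Classical.propDecidable
  if h : ∃ s, s < t ∧ ∀ u, u < t → dist (x t) (x s) ≤ dist (x t) (x u) then
    Nat.find h
  else 0

/-- The average number of mistakes of the nearest neighbor rule on the binary
target `𝟙_A` along the sequence `x`, up to horizon `T`. -/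
noncomputable def nnAvgLoss {X : Type} [MetricSpace X] (x : ℕ → X) (A : Set X)
    (T : ℕ) : ℝ :=
  (T : ℝ)⁻¹ * ∑ t ∈ Finset.range T,
    |A.indicator (fun _ => (1 : ℝ)) (x (nnIdx x t)) -
      A.indicator (fun _ => (1 : ℝ)) (x t)|

/-- Condition SMV (sublinear measurable visits): for every countable measurable
partition of the instance space, the number of cells visited by the first `T` points
of the process is `o(T)` almost surely. -/
def SMV {Ω X : Type} [MeasurableSpace Ω] [MeasurableSpace X] (μ : Measure Ω)
    (Xp : ℕ → Ω → X) : Prop :=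
  ∀ A : ℕ → Set X, (∀ k, MeasurableSet (A k)) →
    Pairwise (Function.onFun Disjoint A) → (⋃ k, A k) = Set.univ →
    ∀ᵐ ω ∂μ, Tendsto
      (fun T : ℕ => (Set.ncard {k : ℕ | ∃ t, t < T ∧ Xp t ω ∈ A k} : ℝ) / T)
      atTop (𝓝 0)

/-- The dyadic partition of `ℝ` around `a`: the singleton `{a}` together with the
intervals `[a+2^i, a+2^(i+1))` and `(a−2^(i+1), a−2^i]` for `i : ℤ`. -/
def dyadicPartition (a : ℝ) : Set (Set ℝ) :=
  {C | C = {a} ∨ (∃ i : ℤ, C = Set.Ico (a + 2 ^ i) (a + 2 ^ (i + 1))) ∨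
    (∃ i : ℤ, C = Set.Ioc (a - 2 ^ (i + 1)) (a - 2 ^ i))}

lemma zlog_le {r : ℝ} (hr : 0 < r) : (2:ℝ) ^ (Int.log 2 r) ≤ r := by
  simpa using Int.zpow_log_le_self (R := ℝ) (b := 2) (by norm_num) hr

lemma zlog_lt (r : ℝ) : r < (2:ℝ) ^ (Int.log 2 r + 1) := by
  simpa using Int.lt_zpow_succ_log_self (R := ℝ) (b := 2) (by norm_num) r

lemma zlog_eq {r : ℝ} {j : ℤ} (h1 : (2:ℝ) ^ j ≤ r) (h2 : r < (2:ℝ) ^ (j + 1)) :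
    Int.log 2 r = j := by
  have hr : 0 < r := lt_of_lt_of_le (zpow_pos two_pos j) h1
  have ha : j ≤ Int.log 2 r :=
    (Int.zpow_le_iff_le_log (R := ℝ) (b := 2) (by norm_num) hr).mp (by simpa using h1)
  have hb : Int.log 2 r < j + 1 :=
    (Int.lt_zpow_iff_log_lt (R := ℝ) (b := 2) (by norm_num) hr).mp (by simpa using h2)
  omega

noncomputable def dcell (a y : ℝ) : Set ℝ :=
  if y = a then {a}
  else if a < y then
    Set.Ico (a + 2 ^ Int.log 2 (y - a)) (a + 2 ^ (Int.log 2 (y - a) + 1))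
  else Set.Ioc (a - 2 ^ (Int.log 2 (a - y) + 1)) (a - 2 ^ Int.log 2 (a - y))

lemma mem_dcell (a y : ℝ) : y ∈ dcell a y := by
  unfold dcell
  split_ifs with h1 h2
  · simp [h1]
  · have hr : 0 < y - a := sub_pos.mpr h2
    exact ⟨by linarith [zlog_le hr], by linarith [zlog_lt (y - a)]⟩
  · have hy : y < a := lt_of_le_of_ne (not_lt.mp h2) h1
    have hr : 0 < a - y := sub_pos.mpr hy
    exact ⟨by linarith [zlog_lt (a - y)], by linarith [zlog_le hr]⟩

lemma dcell_mem (a y : ℝ) : dcell a y ∈ dyadicPartition a := by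
  unfold dcell dyadicPartition
  split_ifs with h1 h2
  · exact Or.inl rfl
  · exact Or.inr (Or.inl ⟨_, rfl⟩)
  · exact Or.inr (Or.inr ⟨_, rfl⟩)

lemma eq_dcell {a : ℝ} {C : Set ℝ} (hC : C ∈ dyadicPartition a) {y : ℝ} (hy : y ∈ C) :
    C = dcell a y := by
  unfold dcell
  rcases hC with h | ⟨i, rfl⟩ | ⟨i, rfl⟩
  · subst h
    simp only [Set.mem_singleton_iff] at hy
    simp [hy]
  · obtain ⟨h1, h2⟩ := hy
    have hpos : (0:ℝ) < 2 ^ i := zpow_pos two_pos i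
    have hya : a < y := by linarith
    rw [if_neg (by linarith), if_pos hya,
      zlog_eq (r := y - a) (j := i) (by linarith) (by linarith)]
  · obtain ⟨h1, h2⟩ := hy
    have hpos : (0:ℝ) < 2 ^ i := zpow_pos two_pos i
    have hya : y < a := by linarith
    rw [if_neg (by linarith), if_neg (by linarith),
      zlog_eq (r := a - y) (j := i) (by linarith) (by linarith)]

lemma key {a y z w : ℝ} (hz : z ∈ dcell a y) (hw : dist y w ≤ dist y z)
    {A : Set ℝ} (hA : A = Set.Iio a ∨ A = Set.Iic a) : (w ∈ A ↔ y ∈ A) := by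
  have hy := mem_dcell a y
  rw [Real.dist_eq, Real.dist_eq] at hw
  unfold dcell at hz hy
  split_ifs at hz hy with h1 h2
  · simp only [Set.mem_singleton_iff] at hz
    have : y = w := by
      have : |y - z| = 0 := by rw [hz, h1]; simp
      have h0 : |y - w| ≤ 0 := by linarith
      have := abs_nonneg (y - w)
      have : |y - w| = 0 := le_antisymm h0 this
      have := abs_eq_zero.mp this
      linarith
    rw [this]
  · -- a < y
    set i := Int.log 2 (y - a) with hi
    have h2i : (2:ℝ) ^ (i + 1) = 2 * 2 ^ i := by
      rw [zpow_add_one₀ (two_ne_zero)]; ring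
    obtain ⟨hz1, hz2⟩ := hz
    obtain ⟨hy1, hy2⟩ := hy
    have hyz : |y - z| < 2 ^ i := abs_lt.mpr ⟨by linarith, by linarith⟩
    have hyw := abs_lt.mp (lt_of_le_of_lt hw hyz)
    have hwa : a < w := by linarith
    rcases hA with rfl | rfl
    · simp only [Set.mem_Iio]
      constructor <;> intro <;> linarith
    · simp only [Set.mem_Iic]
      constructor <;> intro <;> linarith
  · -- y < a
    have hya : y < a := lt_of_le_of_ne (not_lt.mp h2) h1
    set i := Int.log 2 (a - y) with hi
    have h2i : (2:ℝ) ^ (i + 1) = 2 * 2 ^ i := by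
      rw [zpow_add_one₀ (two_ne_zero)]; ring
    obtain ⟨hz1, hz2⟩ := hz
    obtain ⟨hy1, hy2⟩ := hy
    have hyz : |y - z| < 2 ^ i := abs_lt.mpr ⟨by linarith, by linarith⟩
    have hyw := abs_lt.mp (lt_of_le_of_lt hw hyz)
    have hwa : w < a := by linarith
    rcases hA with rfl | rfl
    · simp only [Set.mem_Iio]
      constructor <;> intro <;> linarith
    · simp only [Set.mem_Iic]
      constructor <;> intro <;> linarith

lemma nnIdx_spec {X : Type} [MetricSpace X] (x : ℕ → X) (t : ℕ) (ht : 0 < t) :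
    nnIdx x t < t ∧ ∀ u, u < t → dist (x t) (x (nnIdx x t)) ≤ dist (x t) (x u) := by
  classical
  have hex : ∃ s, s < t ∧ ∀ u, u < t → dist (x t) (x s) ≤ dist (x t) (x u) := by
    obtain ⟨b, hb, hmin⟩ := Finset.exists_min_image (Finset.range t)
      (fun u => dist (x t) (x u)) ⟨0, Finset.mem_range.mpr ht⟩
    exact ⟨b, Finset.mem_range.mp hb, fun u hu => hmin u (Finset.mem_range.mpr hu)⟩
  rw [nnIdx, dif_pos hex]
  have h := Nat.find_spec hex
  convert h using 3 <;> congr!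

/-- For targets `𝟙_{(-∞,a)}` or `𝟙_{(-∞,a]}`, the number of times
`t < T` at which the nearest neighbor prediction errs (with `t = 0`, the first
prediction, always counted as an error) is at most the number of cells of the dyadic
partition around `a` that the sequence visits before time `T`. -/
theorem nn_errors_le_visited_cells (a : ℝ) (x : ℕ → ℝ) (T : ℕ) (hT : 1 ≤ T)
    (A : Set ℝ) (hA : A = Set.Iio a ∨ A = Set.Iic a) :
    Set.ncard {t : ℕ | t < T ∧ (t = 0 ∨ ¬((x (nnIdx x t) ∈ A) ↔ (x t ∈ A)))} ≤
      Set.ncard {C ∈ dyadicPartition a | ∃ t, t < T ∧ x t ∈ C} := by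
  classical
  set S := {t : ℕ | t < T ∧ (t = 0 ∨ ¬((x (nnIdx x t) ∈ A) ↔ (x t ∈ A)))} with hS
  set V := {C ∈ dyadicPartition a | ∃ t, t < T ∧ x t ∈ C} with hV
  -- no two mistake times share a cell
  have hcore : ∀ s t : ℕ, s < t → t ∈ S → x s ∉ dcell a (x t) := by
    intro s t hst htS hcell
    have ht0 : 0 < t := Nat.pos_of_ne_zero (by omega)
    obtain ⟨hlt, hmin⟩ := nnIdx_spec x t ht0
    rcases htS.2 with h0 | hbad
    · omega
    · exact hbad (key hcell (hmin s hst) hA)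
  have hinj : Set.InjOn (fun t => dcell a (x t)) S := by
    intro s hs t ht heq
    by_contra hne
    have heq' : dcell a (x s) = dcell a (x t) := heq
    rcases Nat.lt_or_ge s t with h | h
    · exact hcore s t h ht (heq' ▸ mem_dcell a (x s))
    · have h' : t < s := lt_of_le_of_ne h (fun e => hne e.symm)
      exact hcore t s h' hs (heq'.symm ▸ mem_dcell a (x t))
  have hsub : (fun t => dcell a (x t)) '' S ⊆ V := by
    rintro C ⟨t, htS, rfl⟩
    exact ⟨dcell_mem a (x t), t, htS.1, mem_dcell a (x t)⟩
  have hVsub : V ⊆ (fun t => dcell a (x t)) '' (Set.Iio T) := by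
    rintro C ⟨hC, t, htT, hxt⟩
    exact ⟨t, htT, (eq_dcell hC hxt).symm⟩
  have hVfin : V.Finite := ((Set.finite_Iio T).image _).subset hVsub
  calc S.ncard = ((fun t => dcell a (x t)) '' S).ncard :=
        (Set.ncard_image_of_injOn hinj).symm
    _ ≤ V.ncard := Set.ncard_le_ncard hsub hVfin
end
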